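/- Let Δ be a 1-dimensional simplicial complex consisting of a single edge, modeled by A = ℝ[t], with tent functions T₁ = (1+t)/2 and T₂ = (1-t)/2. A polynomial F ∈ ℝ[t] is non-negative on [-1,1] if and only if there exist sums of two squares S, S₁₂ ∈ ℝ[t] of degree at most deg(F)+1 with F = S + S₁₂·T₁T₂. -/

import Mathlib

open Polynomial Filter

namespace Stmt18Aux

def PsdIcc (F : ℝ[X]) : Prop := ∀ x ∈ Set.Icc (-1:ℝ) 1, 0 ≤ F.eval x
def PsdR (F : ℝ[X]) : Prop := ∀ x : ℝ, 0 ≤ F.eval x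

lemma eval_nonneg_of_seq (H : ℝ[X]) (z y : ℝ)
    (h : ∀ n : ℕ, 0 ≤ H.eval (z + (y - z) / (n + 1))) : 0 ≤ H.eval z := by
  have hx : Tendsto (fun n : ℕ => z + (y - z) / (n + 1)) atTop (nhds z) := by
    have h0 : Tendsto (fun n : ℕ => (y - z) * (1 / ((n : ℝ) + 1))) atTop
        (nhds ((y - z) * 0)) :=
      tendsto_const_nhds.mul tendsto_one_div_add_atTop_nhds_zero_nat
    have h1 : Tendsto (fun n : ℕ => z + (y - z) * (1 / ((n : ℝ) + 1))) atTop
        (nhds (z + (y - z) * 0)) := tendsto_const_nhds.add h0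
    simpa [mul_one_div, div_eq_mul_inv] using h1
  have hcont : Tendsto (fun n : ℕ => H.eval (z + (y - z) / (n + 1))) atTop
      (nhds (H.eval z)) := (H.continuousAt).tendsto.comp hx
  exact ge_of_tendsto' hcont h

lemma psdR_of_ne (H : ℝ[X]) (z : ℝ) (h : ∀ x : ℝ, x ≠ z → 0 ≤ H.eval x) : PsdR H := by
  intro x
  by_cases hxz : x = z
  · subst hxz
    refine eval_nonneg_of_seq H x (x + 1) ?_
    intro n
    apply h
    have hn : (0:ℝ) < (n:ℝ) + 1 := by positivity
    have : (0:ℝ) < (x + 1 - x) / ((n:ℝ) + 1) := by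
      rw [show x + 1 - x = (1:ℝ) by ring]; positivity
    intro hc
    nlinarith [this, hc]
  · exact h x hxz

lemma psdIcc_of_ne (H : ℝ[X]) (z : ℝ) (hz : z ∈ Set.Icc (-1:ℝ) 1)
    (h : ∀ x ∈ Set.Icc (-1:ℝ) 1, x ≠ z → 0 ≤ H.eval x) : PsdIcc H := by
  intro x hx
  by_cases hxz : x = z
  · subst hxz
    obtain ⟨hz1, hz2⟩ := hz
    set y : ℝ := if x ≤ 0 then 1 else -1 with hy
    refine eval_nonneg_of_seq H x y ?_
    intro n
    have hn : (1:ℝ) ≤ (n:ℝ) + 1 := by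
      have : (0:ℝ) ≤ (n:ℝ) := Nat.cast_nonneg n
      linarith
    have hn0 : (0:ℝ) < (n:ℝ) + 1 := by linarith
    by_cases hx0 : x ≤ 0
    · have hyv : y = 1 := by simp [hy, hx0]
      rw [hyv]
      have ht0 : (0:ℝ) < (1 - x) / ((n:ℝ) + 1) := by
        apply div_pos <;> linarith
      have ht1 : (1 - x) / ((n:ℝ) + 1) ≤ 1 - x := by
        apply div_le_self <;> linarith
      refine h _ ⟨by linarith, by linarith⟩ (by intro hc; nlinarith)
    · have hyv : y = -1 := by simp [hy, hx0]
      rw [hyv]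
      push_neg at hx0
      have ht0 : (-1 - x) / ((n:ℝ) + 1) < 0 := by
        apply div_neg_of_neg_of_pos <;> linarith
      have ht1 : -1 - x ≤ (-1 - x) / ((n:ℝ) + 1) := by
        rw [div_eq_mul_one_div]
        have h1n : 1 / ((n:ℝ) + 1) ≤ 1 := by
          rw [div_le_one hn0]; linarith
        nlinarith [h1n, (by positivity : (0:ℝ) < 1 / ((n:ℝ)+1))]
      refine h _ ⟨by linarith, by linarith⟩ (by intro hc; nlinarith)
  · exact h x hx hxz



lemma sq_dvd_of_nonneg_near (F : ℝ[X]) (hF : F ≠ 0) (z ε : ℝ) (hε : 0 < ε)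
    (hroot : F.IsRoot z) (hnn : ∀ x : ℝ, |x - z| < ε → 0 ≤ F.eval x) :
    (X - C z) ^ 2 ∣ F := by
  obtain ⟨U, hU, hUd⟩ := F.exists_eq_pow_rootMultiplicity_mul_and_not_dvd hF z
  set m := F.rootMultiplicity z with hm
  have hm1 : 1 ≤ m := (rootMultiplicity_pos hF).2 hroot
  have hUz : U.eval z ≠ 0 := by
    intro hc
    exact hUd ((dvd_iff_isRoot).2 hc)
  have hme : Even m := by
    by_contra hodd
    have hOdd : Odd m := Nat.odd_iff.2 (by
      rcases Nat.even_or_odd m with h | h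
      · exact absurd h hodd
      · exact Nat.odd_iff.1 h)
    set V : ℝ → ℝ := fun s => U.eval (z + s) * U.eval (z - s) with hV
    have hVc : ContinuousAt V 0 := by
      apply Continuous.continuousAt
      exact (U.continuous.comp (continuous_const.add continuous_id)).mul
        (U.continuous.comp (continuous_const.sub continuous_id))
    have hV0 : 0 < V 0 := by
      simp only [hV, add_zero, sub_zero]
      exact mul_self_pos.2 hUz
    have hev : ∀ᶠ s in nhds (0:ℝ), 0 < V s := hVc.eventually_const_lt hV0
    obtain ⟨δ, hδ, hδV⟩ := Metric.eventually_nhds_iff.1 hev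
    set s : ℝ := min δ ε / 2 with hs
    have hs0 : 0 < s := by positivity
    have hsδ : s < δ := by
      have : min δ ε ≤ δ := min_le_left _ _
      simp only [hs]; linarith
    have hsε : s < ε := by
      have : min δ ε ≤ ε := min_le_right _ _
      simp only [hs]; linarith
    have hVs : 0 < V s := hδV (by
      simp only [Real.dist_eq, sub_zero, abs_of_pos hs0]; exact hsδ)
    have habs1 : z + s - z = s := by ring
    have habs2 : z - s - z = -s := by ring
    have hps : 0 ≤ F.eval (z + s) := hnn _ (by rw [habs1, abs_of_pos hs0]; exact hsε)
    have hms : 0 ≤ F.eval (z - s) := hnn _ (by rw [habs2, abs_neg, abs_of_pos hs0]; exact hsε)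
    have hep : F.eval (z + s) = s ^ m * U.eval (z + s) := by
      rw [hU]; simp [eval_pow]
    have hem : F.eval (z - s) = (-s) ^ m * U.eval (z - s) := by
      rw [hU]; simp only [eval_mul, eval_pow, eval_sub, eval_X, eval_C]
      ring_nf
    have hneg : (-s) ^ m = -(s ^ m) := hOdd.neg_pow s
    have hprod : F.eval (z + s) * F.eval (z - s) = -(s ^ m * s ^ m * V s) := by
      rw [hep, hem, hneg, hV]; ring
    have hsm : 0 < s ^ m * s ^ m := by positivity
    nlinarith [mul_nonneg hps hms]
  have h2m : 2 ≤ m := by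
    rw [Nat.even_iff] at hme; omega
  exact dvd_trans (pow_dvd_pow _ h2m) (F.pow_rootMultiplicity_dvd z)




lemma quad_factor (F : ℝ[X]) (z : ℂ) (hroot : aeval z F = 0) (him : z.im ≠ 0) :
    ∃ H : ℝ[X], F = ((X - C z.re) ^ 2 + (C z.im) ^ 2) * H := by
  obtain ⟨H, hH⟩ := F.quadratic_dvd_of_aeval_eq_zero_im_ne_zero hroot him
  refine ⟨H, ?_⟩
  have hn : (‖z‖ : ℝ) ^ 2 = z.re ^ 2 + z.im ^ 2 := by
    rw [Complex.sq_norm, Complex.normSq_apply]; ring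
  have hD : (X ^ 2 - C (2 * z.re) * X + C (‖z‖ ^ 2) : ℝ[X])
      = (X - C z.re) ^ 2 + (C z.im) ^ 2 := by
    rw [hn, show (2 * z.re) = z.re + z.re by ring, C_add, C_add, C_pow, C_pow]
    ring
  rw [← hD]; exact hH

lemma quad_natDegree (a b : ℝ) : ((X - C a) ^ 2 + (C b) ^ 2 : ℝ[X]).natDegree = 2 := by
  compute_degree!

lemma root_of_aeval_real (F : ℝ[X]) (z : ℂ) (hroot : aeval z F = 0) (him : z.im = 0) :
    F.IsRoot z.re := by
  have hz : (z.re : ℂ) = z := by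
    apply Complex.ext <;> simp [him]
  have h2 : aeval (RCLike.ofReal z.re : ℂ) F = 0 := by
    rw [show (RCLike.ofReal z.re : ℂ) = (z.re : ℂ) from rfl, hz]; exact hroot
  rw [Polynomial.aeval_ofReal] at h2
  exact RCLike.ofReal_eq_zero.mp h2

lemma exists_complex_root (F : ℝ[X]) (hF : F ≠ 0) (hd : F.natDegree ≠ 0) :
    ∃ z : ℂ, aeval z F = 0 := by
  have hdeg : 0 < F.degree := natDegree_pos_iff_degree_pos.1 (Nat.pos_of_ne_zero hd)
  have hmap : 0 < (F.map (algebraMap ℝ ℂ)).degree := by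
    rwa [degree_map_eq_of_injective (algebraMap ℝ ℂ).injective]
  obtain ⟨z, hz⟩ := Complex.exists_root hmap
  refine ⟨z, ?_⟩
  rwa [IsRoot, eval_map, ← aeval_def] at hz


lemma extract_R (F : ℝ[X]) (hF : F ≠ 0) (hd : F.natDegree ≠ 0) (hpsd : PsdR F) :
    ∃ D H : ℝ[X], PsdR D ∧ (∃ u v : ℝ[X], D = u ^ 2 + v ^ 2) ∧ F = D * H ∧ PsdR H ∧
      H.natDegree + 2 = F.natDegree := by
  obtain ⟨z, hz⟩ := exists_complex_root F hF hd
  by_cases him : z.im = 0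
  · -- real root, even multiplicity
    have hr : F.IsRoot z.re := root_of_aeval_real F z hz him
    have hdvd : (X - C z.re) ^ 2 ∣ F :=
      sq_dvd_of_nonneg_near F hF z.re 1 one_pos hr (fun x _ => hpsd x)
    obtain ⟨H, hH⟩ := hdvd
    have hH0 : H ≠ 0 := by rintro rfl; rw [mul_zero] at hH; exact hF hH
    have hXz : ((X - C z.re) ^ 2 : ℝ[X]) ≠ 0 := pow_ne_zero _ (X_sub_C_ne_zero z.re)
    refine ⟨(X - C z.re) ^ 2, H, ?_, ⟨X - C z.re, 0, by ring⟩, hH, ?_, ?_⟩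
    · intro x; simp only [eval_pow, eval_sub, eval_X, eval_C]; positivity
    · apply psdR_of_ne H z.re
      intro x hx
      have h1 := hpsd x
      rw [hH, eval_mul, eval_pow, eval_sub, eval_X, eval_C] at h1
      have h2 : 0 < (x - z.re) ^ 2 := by
        have hne : x - z.re ≠ 0 := sub_ne_zero.2 hx
        positivity
      exact (mul_nonneg_iff_of_pos_left h2).1 h1
    · rw [hH, natDegree_mul hXz hH0]
      rw [show ((X - C z.re) ^ 2 : ℝ[X]).natDegree = 2 by
        rw [natDegree_pow, natDegree_X_sub_C]]
      omega
  · obtain ⟨H, hH⟩ := quad_factor F z hz him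
    have hb2 : (0:ℝ) < z.im ^ 2 := by positivity
    have hDpos : ∀ x : ℝ, 0 < (((X - C z.re) ^ 2 + (C z.im) ^ 2 : ℝ[X])).eval x := by
      intro x
      simp only [eval_add, eval_pow, eval_sub, eval_X, eval_C]
      positivity
    have hD0 : ((X - C z.re) ^ 2 + (C z.im) ^ 2 : ℝ[X]) ≠ 0 := by
      intro hc
      have := hDpos 0
      rw [hc] at this; simp at this
    have hH0 : H ≠ 0 := by rintro rfl; rw [mul_zero] at hH; exact hF hH
    refine ⟨_, H, fun x => (hDpos x).le, ⟨X - C z.re, C z.im, rfl⟩, hH, ?_, ?_⟩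
    · intro x
      have h1 := hpsd x
      rw [hH, eval_mul] at h1
      exact (mul_nonneg_iff_of_pos_left (hDpos x)).1 h1
    · rw [hH, natDegree_mul hD0 hH0, quad_natDegree]
      omega

lemma fejer : ∀ n : ℕ, ∀ G : ℝ[X], G.natDegree ≤ n → PsdR G →
    ∃ a b : ℝ[X], G = a ^ 2 + b ^ 2 := by
  intro n
  induction n using Nat.strong_induction_on with
  | _ n ih =>
    intro G hdeg hpsd
    by_cases h0 : G.natDegree = 0
    · have hG : G = C (G.coeff 0) := eq_C_of_natDegree_eq_zero h0
      have hc : 0 ≤ G.coeff 0 := by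
        have h1 := hpsd 0
        rw [hG, eval_C] at h1
        exact h1
      refine ⟨C (Real.sqrt (G.coeff 0)), 0, ?_⟩
      have h3 : (C (Real.sqrt (G.coeff 0)) : ℝ[X]) ^ 2 + 0 ^ 2 = C (G.coeff 0) := by
        rw [← C_pow, Real.sq_sqrt hc]; ring
      rw [h3]; exact hG
    · have hG0 : G ≠ 0 := fun h => h0 (by rw [h]; simp)
      obtain ⟨D, H, _, ⟨u, v, huv⟩, hGDH, hHpsd, hdeg2⟩ := extract_R G hG0 h0 hpsd
      obtain ⟨p, q, hpq⟩ := ih H.natDegree (by omega) H le_rfl hHpsd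
      exact ⟨u * p - v * q, u * q + v * p, by rw [hGDH, huv, hpq]; ring⟩

lemma C_half_two : (2 : ℝ[X]) * C (1/2 : ℝ) = 1 := by
  rw [← map_ofNat C 2, ← C_mul, ← C_1]
  norm_num

lemma extract_Icc (F : ℝ[X]) (hF : F ≠ 0) (hd : F.natDegree ≠ 0) (hpsd : PsdIcc F) :
    (∃ D H : ℝ[X], PsdR D ∧ D.natDegree ≤ 2 ∧ F = D * H ∧ PsdIcc H ∧
        H.natDegree + 2 = F.natDegree) ∨
    (∃ (cp cm : ℝ) (H : ℝ[X]), 0 ≤ cp ∧ 0 ≤ cm ∧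
        F = (C cp * (1 + X) + C cm * (1 - X)) * H ∧ PsdIcc H ∧
        H.natDegree + 1 = F.natDegree) := by
  obtain ⟨z, hz⟩ := exists_complex_root F hF hd
  by_cases him : z.im = 0
  · have hr : F.IsRoot z.re := root_of_aeval_real F z hz him
    set r : ℝ := z.re with hrdef
    by_cases hr1 : 1 ≤ r
    · -- root at or beyond right endpoint
      right
      obtain ⟨Ht, hHt⟩ := (dvd_iff_isRoot.2 hr : (X - C r) ∣ F)
      set H : ℝ[X] := -Ht with hHdef
      have hFH : F = (C r - X) * H := by rw [hHt, hHdef]; ring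
      have hH0 : H ≠ 0 := by
        rintro hc
        rw [hc, mul_zero] at hFH; exact hF hFH
      have hL : (C ((r - 1)/2) * (1 + X) + C ((r + 1)/2) * (1 - X) : ℝ[X]) = C r - X := by
        rw [show (r - 1)/2 = (r - 1) * (1/2) by ring, show (r + 1)/2 = (r + 1) * (1/2) by ring]
        simp only [C_mul, C_sub, C_add, C_neg, C_1]
        linear_combination (C r - (X : ℝ[X])) * C_half_two
      have hHpsd : PsdIcc H := by
        apply psdIcc_of_ne H 1 (by constructor <;> norm_num)
        intro x hx hx1
        obtain ⟨hxa, hxb⟩ := hx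
        have h1 := hpsd x ⟨hxa, hxb⟩
        rw [hFH, eval_mul, eval_sub, eval_C, eval_X] at h1
        have h2 : 0 < r - x := by
          rcases lt_or_eq_of_le hxb with h | h
          · linarith
          · exact absurd h hx1
        exact (mul_nonneg_iff_of_pos_left h2).1 h1
      refine ⟨(r - 1)/2, (r + 1)/2, H, by linarith, by linarith, by rw [hL]; exact hFH,
        hHpsd, ?_⟩
      have hCX : (C r - X : ℝ[X]) ≠ 0 := by
        intro hc
        have : (C r - X : ℝ[X]).natDegree = 1 := by compute_degree!
        rw [hc] at this; simp at this
      have hdeg1 : (C r - X : ℝ[X]).natDegree = 1 := by compute_degree!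
      rw [hFH, natDegree_mul hCX hH0, hdeg1]
      omega
    · by_cases hr2 : r ≤ -1
      · -- root at or beyond left endpoint
        right
        obtain ⟨H, hFH⟩ := (dvd_iff_isRoot.2 hr : (X - C r) ∣ F)
        have hH0 : H ≠ 0 := by
          rintro hc
          rw [hc, mul_zero] at hFH; exact hF hFH
        have hL : (C ((1 - r)/2) * (1 + X) + C ((-1 - r)/2) * (1 - X) : ℝ[X]) = X - C r := by
          rw [show (1 - r)/2 = (1 - r) * (1/2) by ring, show (-1 - r)/2 = (-1 - r) * (1/2) by ring]
          simp only [C_mul, C_sub, C_add, C_neg, C_1]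
          linear_combination ((X : ℝ[X]) - C r) * C_half_two
        have hHpsd : PsdIcc H := by
          apply psdIcc_of_ne H (-1) (by constructor <;> norm_num)
          intro x hx hx1
          obtain ⟨hxa, hxb⟩ := hx
          have h1 := hpsd x ⟨hxa, hxb⟩
          rw [hFH, eval_mul, eval_sub, eval_C, eval_X] at h1
          have h2 : 0 < x - r := by
            rcases lt_or_eq_of_le hxa with h | h
            · linarith
            · exact absurd h.symm hx1
          exact (mul_nonneg_iff_of_pos_left h2).1 h1
        refine ⟨(1 - r)/2, (-1 - r)/2, H, by linarith, by linarith, by rw [hL]; exact hFH,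
          hHpsd, ?_⟩
        have hXC : (X - C r : ℝ[X]) ≠ 0 := X_sub_C_ne_zero r
        rw [hFH, natDegree_mul hXC hH0, natDegree_X_sub_C]
        omega
      · -- interior root
        left
        push_neg at hr1 hr2
        have hε : 0 < min (1 - r) (r + 1) := by
          apply lt_min <;> linarith
        have hdvd : (X - C r) ^ 2 ∣ F := by
          apply sq_dvd_of_nonneg_near F hF r _ hε hr
          intro x hx
          rw [abs_lt] at hx
          obtain ⟨hxa, hxb⟩ := hx
          have h1 : x - r < 1 - r := lt_of_lt_of_le hxb (min_le_left _ _)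
          have h2 : -(r + 1) < x - r := by
            have := min_le_right (1 - r) (r + 1)
            linarith
          exact hpsd x ⟨by linarith, by linarith⟩
        obtain ⟨H, hFH⟩ := hdvd
        have hH0 : H ≠ 0 := by
          rintro hc
          rw [hc, mul_zero] at hFH; exact hF hFH
        have hXz : ((X - C r) ^ 2 : ℝ[X]) ≠ 0 := pow_ne_zero _ (X_sub_C_ne_zero r)
        refine ⟨(X - C r) ^ 2, H, ?_, ?_, hFH, ?_, ?_⟩
        · intro x; simp only [eval_pow, eval_sub, eval_X, eval_C]; positivity
        · rw [natDegree_pow, natDegree_X_sub_C]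
        · apply psdIcc_of_ne H r ⟨by linarith, by linarith⟩
          intro x hx hxr
          have h1 := hpsd x hx
          rw [hFH, eval_mul, eval_pow, eval_sub, eval_X, eval_C] at h1
          have h2 : 0 < (x - r) ^ 2 := by
            have hne : x - r ≠ 0 := sub_ne_zero.2 hxr
            positivity
          exact (mul_nonneg_iff_of_pos_left h2).1 h1
        · rw [hFH, natDegree_mul hXz hH0, natDegree_pow, natDegree_X_sub_C]
          omega
  · left
    obtain ⟨H, hFH⟩ := quad_factor F z hz him
    have hDpos : ∀ x : ℝ, 0 < (((X - C z.re) ^ 2 + (C z.im) ^ 2 : ℝ[X])).eval x := by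
      intro x
      simp only [eval_add, eval_pow, eval_sub, eval_X, eval_C]
      positivity
    have hD0 : ((X - C z.re) ^ 2 + (C z.im) ^ 2 : ℝ[X]) ≠ 0 := by
      intro hc
      have h1 := hDpos 0
      rw [hc] at h1; simp at h1
    have hH0 : H ≠ 0 := by rintro rfl; rw [mul_zero] at hFH; exact hF hFH
    refine ⟨_, H, fun x => (hDpos x).le, le_of_eq (quad_natDegree _ _), hFH, ?_, ?_⟩
    · intro x hx
      have h1 := hpsd x hx
      rw [hFH, eval_mul] at h1
      exact (mul_nonneg_iff_of_pos_left (hDpos x)).1 h1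
    · rw [hFH, natDegree_mul hD0 hH0, quad_natDegree]
      omega

def EvenRep (F : ℝ[X]) : Prop :=
  ∃ G H : ℝ[X], PsdR G ∧ PsdR H ∧ F = G + (1 - X ^ 2) * H ∧
    G.natDegree ≤ F.natDegree ∧ ((1 - X ^ 2) * H).natDegree ≤ F.natDegree

def OddRep (F : ℝ[X]) : Prop :=
  ∃ G H : ℝ[X], PsdR G ∧ PsdR H ∧ F = (1 + X) * G + (1 - X) * H ∧
    ((1 + X) * G).natDegree ≤ F.natDegree ∧ ((1 - X) * H).natDegree ≤ F.natDegree

lemma ndeg_1p : (1 + X : ℝ[X]).natDegree = 1 := by compute_degree!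
lemma ndeg_1m : (1 - X : ℝ[X]).natDegree = 1 := by compute_degree!

lemma natDegree_C_mul_le (c : ℝ) (p : ℝ[X]) : (C c * p).natDegree ≤ p.natDegree := by
  calc (C c * p).natDegree ≤ (C c).natDegree + p.natDegree := natDegree_mul_le
    _ = p.natDegree := by rw [natDegree_C, Nat.zero_add]


lemma step_quad (F D H : ℝ[X]) (hDpsd : PsdR D) (hD2 : D.natDegree ≤ 2)
    (hdeg : H.natDegree + 2 ≤ F.natDegree) (hFDH : F = D * H) :
    (EvenRep H → EvenRep F) ∧ (OddRep H → OddRep F) := by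
  constructor
  · rintro ⟨G1, H1, hG1, hH1, hrep, hb1, hb2⟩
    refine ⟨D * G1, D * H1,
      fun x => by rw [eval_mul]; exact mul_nonneg (hDpsd x) (hG1 x),
      fun x => by rw [eval_mul]; exact mul_nonneg (hDpsd x) (hH1 x), ?_, ?_, ?_⟩
    · rw [hFDH, hrep]; ring
    · calc (D * G1).natDegree ≤ D.natDegree + G1.natDegree := natDegree_mul_le
        _ ≤ 2 + H.natDegree := Nat.add_le_add hD2 hb1
        _ ≤ F.natDegree := by omega
    · rw [show ((1 - X ^ 2) * (D * H1) : ℝ[X]) = D * ((1 - X ^ 2) * H1) by ring]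
      calc (D * ((1 - X ^ 2) * H1)).natDegree
          ≤ D.natDegree + ((1 - X ^ 2) * H1).natDegree := natDegree_mul_le
        _ ≤ 2 + H.natDegree := Nat.add_le_add hD2 hb2
        _ ≤ F.natDegree := by omega
  · rintro ⟨G1, H1, hG1, hH1, hrep, hb1, hb2⟩
    refine ⟨D * G1, D * H1,
      fun x => by rw [eval_mul]; exact mul_nonneg (hDpsd x) (hG1 x),
      fun x => by rw [eval_mul]; exact mul_nonneg (hDpsd x) (hH1 x), ?_, ?_, ?_⟩
    · rw [hFDH, hrep]; ring
    · rw [show ((1 + X) * (D * G1) : ℝ[X]) = D * ((1 + X) * G1) by ring]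
      calc (D * ((1 + X) * G1)).natDegree
          ≤ D.natDegree + ((1 + X) * G1).natDegree := natDegree_mul_le
        _ ≤ 2 + H.natDegree := Nat.add_le_add hD2 hb1
        _ ≤ F.natDegree := by omega
    · rw [show ((1 - X) * (D * H1) : ℝ[X]) = D * ((1 - X) * H1) by ring]
      calc (D * ((1 - X) * H1)).natDegree
          ≤ D.natDegree + ((1 - X) * H1).natDegree := natDegree_mul_le
        _ ≤ 2 + H.natDegree := Nat.add_le_add hD2 hb2
        _ ≤ F.natDegree := by omega

lemma step_lin (F H : ℝ[X]) (cp cm : ℝ) (hcp : 0 ≤ cp) (hcm : 0 ≤ cm)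
    (hdeg : H.natDegree + 1 ≤ F.natDegree)
    (hFLH : F = (C cp * (1 + X) + C cm * (1 - X)) * H) :
    (EvenRep H → OddRep F) ∧ (OddRep H → EvenRep F) := by
  constructor
  · rintro ⟨G1, H1, hG1, hH1, hrep, hb1, hb2⟩
    refine ⟨C cp * G1 + C cm * ((1 - X) ^ 2 * H1),
           C cm * G1 + C cp * ((1 + X) ^ 2 * H1), ?_, ?_, ?_, ?_, ?_⟩
    · intro x
      simp only [eval_add, eval_mul, eval_pow, eval_sub, eval_C, eval_X, eval_one]
      have := hG1 x; have := hH1 x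
      have h1 : (0:ℝ) ≤ (1 - x) ^ 2 := sq_nonneg _
      nlinarith [mul_nonneg hcp (hG1 x), mul_nonneg hcm (mul_nonneg h1 (hH1 x))]
    · intro x
      simp only [eval_add, eval_mul, eval_pow, eval_sub, eval_C, eval_X, eval_one]
      have h1 : (0:ℝ) ≤ (1 + x) ^ 2 := sq_nonneg _
      nlinarith [mul_nonneg hcm (hG1 x), mul_nonneg hcp (mul_nonneg h1 (hH1 x))]
    · rw [hFLH, hrep]; ring
    · rw [show ((1 + X) * (C cp * G1 + C cm * ((1 - X) ^ 2 * H1)) : ℝ[X])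
          = C cp * ((1 + X) * G1) + C cm * ((1 - X) * ((1 - X ^ 2) * H1)) by ring]
      apply le_trans (natDegree_add_le _ _)
      apply max_le
      · apply le_trans (natDegree_C_mul_le _ _)
        apply le_trans natDegree_mul_le
        rw [ndeg_1p]
        omega
      · apply le_trans (natDegree_C_mul_le _ _)
        apply le_trans natDegree_mul_le
        rw [ndeg_1m]
        omega
    · rw [show ((1 - X) * (C cm * G1 + C cp * ((1 + X) ^ 2 * H1)) : ℝ[X])
          = C cm * ((1 - X) * G1) + C cp * ((1 + X) * ((1 - X ^ 2) * H1)) by ring]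
      apply le_trans (natDegree_add_le _ _)
      apply max_le
      · apply le_trans (natDegree_C_mul_le _ _)
        apply le_trans natDegree_mul_le
        rw [ndeg_1m]
        omega
      · apply le_trans (natDegree_C_mul_le _ _)
        apply le_trans natDegree_mul_le
        rw [ndeg_1p]
        omega
  · rintro ⟨G1, H1, hG1, hH1, hrep, hb1, hb2⟩
    refine ⟨C cp * ((1 + X) ^ 2 * G1) + C cm * ((1 - X) ^ 2 * H1),
           C cm * G1 + C cp * H1, ?_, ?_, ?_, ?_, ?_⟩
    · intro x
      simp only [eval_add, eval_mul, eval_pow, eval_sub, eval_C, eval_X, eval_one]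
      have h1 : (0:ℝ) ≤ (1 + x) ^ 2 := sq_nonneg _
      have h2 : (0:ℝ) ≤ (1 - x) ^ 2 := sq_nonneg _
      nlinarith [mul_nonneg hcp (mul_nonneg h1 (hG1 x)),
        mul_nonneg hcm (mul_nonneg h2 (hH1 x))]
    · intro x
      simp only [eval_add, eval_mul, eval_C]
      nlinarith [mul_nonneg hcm (hG1 x), mul_nonneg hcp (hH1 x)]
    · rw [hFLH, hrep]; ring
    · rw [show (C cp * ((1 + X) ^ 2 * G1) + C cm * ((1 - X) ^ 2 * H1) : ℝ[X])
          = C cp * ((1 + X) * ((1 + X) * G1)) + C cm * ((1 - X) * ((1 - X) * H1)) by ring]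
      apply le_trans (natDegree_add_le _ _)
      apply max_le
      · apply le_trans (natDegree_C_mul_le _ _)
        apply le_trans natDegree_mul_le
        rw [ndeg_1p]
        omega
      · apply le_trans (natDegree_C_mul_le _ _)
        apply le_trans natDegree_mul_le
        rw [ndeg_1m]
        omega
    · rw [show ((1 - X ^ 2) * (C cm * G1 + C cp * H1) : ℝ[X])
          = C cm * ((1 - X) * ((1 + X) * G1)) + C cp * ((1 + X) * ((1 - X) * H1)) by ring]
      apply le_trans (natDegree_add_le _ _)
      apply max_le
      · apply le_trans (natDegree_C_mul_le _ _)
        apply le_trans natDegree_mul_le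
        rw [ndeg_1m]
        omega
      · apply le_trans (natDegree_C_mul_le _ _)
        apply le_trans natDegree_mul_le
        rw [ndeg_1p]
        omega

lemma lukacs : ∀ n : ℕ, ∀ F : ℝ[X], F.natDegree ≤ n → PsdIcc F →
    (Even F.natDegree → EvenRep F) ∧ (Odd F.natDegree → OddRep F) := by
  intro n
  induction n using Nat.strong_induction_on with
  | _ n ih =>
    intro F hdeg hpsd
    by_cases hF0 : F = 0
    · subst hF0
      constructor
      · intro _
        exact ⟨0, 0, fun x => by simp, fun x => by simp, by simp, by simp, by simp⟩
      · intro hodd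
        rw [natDegree_zero] at hodd
        exact absurd hodd (by decide)
    · by_cases h0 : F.natDegree = 0
      · constructor
        · intro _
          refine ⟨F, 0, ?_, fun x => by simp, by ring, le_rfl, by simp⟩
          intro x
          have hC : F = C (F.coeff 0) := eq_C_of_natDegree_eq_zero h0
          have h1 := hpsd 0 (by norm_num)
          rw [hC, eval_C] at h1 ⊢
          exact h1
        · intro hodd
          rw [h0] at hodd
          exact absurd hodd (by decide)
      · rcases extract_Icc F hF0 h0 hpsd with
          ⟨D, H, hDpsd, hD2, hFDH, hHpsd, hHdeg⟩ |
          ⟨cp, cm, H, hcp, hcm, hFLH, hHpsd, hHdeg⟩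
        · have ihH := ih H.natDegree (by omega) H le_rfl hHpsd
          have hstep := step_quad F D H hDpsd hD2 (by omega) hFDH
          constructor
          · intro he
            have heH : Even H.natDegree := by
              rw [Nat.even_iff] at he ⊢; omega
            exact hstep.1 (ihH.1 heH)
          · intro ho
            have hoH : Odd H.natDegree := by
              rw [Nat.odd_iff] at ho ⊢; omega
            exact hstep.2 (ihH.2 hoH)
        · have ihH := ih H.natDegree (by omega) H le_rfl hHpsd
          have hstep := step_lin F H cp cm hcp hcm (by omega) hFLH
          constructor
          · intro he
            have hoH : Odd H.natDegree := by
              rw [Nat.even_iff] at he; rw [Nat.odd_iff]; omega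
            exact hstep.2 (ihH.2 hoH)
          · intro ho
            have heH : Even H.natDegree := by
              rw [Nat.odd_iff] at ho; rw [Nat.even_iff]; omega
            exact hstep.1 (ihH.1 heH)

lemma deg_of_mul_le (L p : ℝ[X]) (hL : L ≠ 0) {k : ℕ} (h : (L * p).natDegree ≤ k) :
    p.natDegree ≤ k := by
  by_cases hp : p = 0
  · rw [hp, natDegree_zero]; omega
  · rw [natDegree_mul hL hp] at h; omega

lemma ndeg_1p_ne : (1 + X : ℝ[X]) ≠ 0 := by
  intro hc
  have := ndeg_1p
  rw [hc, natDegree_zero] at this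
  omega

lemma ndeg_1m_ne : (1 - X : ℝ[X]) ≠ 0 := by
  intro hc
  have := ndeg_1m
  rw [hc, natDegree_zero] at this
  omega

lemma ndeg_1mX2 : (1 - X ^ 2 : ℝ[X]).natDegree = 2 := by compute_degree!

lemma ndeg_1mX2_ne : (1 - X ^ 2 : ℝ[X]) ≠ 0 := by
  intro hc
  have := ndeg_1mX2
  rw [hc, natDegree_zero] at this
  omega

lemma hc2 : (C (2:ℝ) : ℝ[X]) = 2 := map_ofNat C 2
lemma hc4 : (C (4:ℝ) : ℝ[X]) = 4 := map_ofNat C 4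

end Stmt18Aux

open Stmt18Aux

/-- Positivity certificate on a single edge: `F ≥ 0` on `[-1,1]` iff
`F = S + S₁₂·T₁T₂` with `S, S₁₂` sums of two squares of degree `≤ deg F + 1`,
where `T₁ = (1+t)/2`, `T₂ = (1-t)/2`. -/
theorem stmt18 (F : Polynomial ℝ) :
    (∀ x ∈ Set.Icc (-1 : ℝ) 1, 0 ≤ F.eval x) ↔
    ∃ p q p' q' : Polynomial ℝ,
      (p ^ 2 + q ^ 2).natDegree ≤ F.natDegree + 1 ∧
      (p' ^ 2 + q' ^ 2).natDegree ≤ F.natDegree + 1 ∧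
      F = (p ^ 2 + q ^ 2) +
        (p' ^ 2 + q' ^ 2) * ((C (1 / 2 : ℝ) * (1 + X)) * (C (1 / 2 : ℝ) * (1 - X))) := by
  constructor
  · intro hpsd
    set d := F.natDegree with hd
    have hmain := lukacs d F le_rfl hpsd
    rcases Nat.even_or_odd d with he | ho
    · obtain ⟨G, H, hG, hH, hrep, hb1, hb2⟩ := hmain.1 he
      obtain ⟨p, q, hpq⟩ := fejer G.natDegree G le_rfl hG
      have hH4 : PsdR (C (4:ℝ) * H) := by
        intro x
        rw [eval_mul, eval_C]
        exact mul_nonneg (by norm_num) (hH x)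
      obtain ⟨p', q', hpq'⟩ := fejer (C (4:ℝ) * H).natDegree _ le_rfl hH4
      rw [hc4] at hpq'
      refine ⟨p, q, p', q', ?_, ?_, ?_⟩
      · rw [← hpq]; omega
      · rw [← hpq']
        have h1 : ((4:ℝ[X]) * H).natDegree ≤ H.natDegree := by
          rw [← hc4]; exact Stmt18Aux.natDegree_C_mul_le _ _
        have h2 : H.natDegree ≤ d := deg_of_mul_le _ _ ndeg_1mX2_ne hb2
        omega
      · rw [← hpq, ← hpq', hrep]
        linear_combination (-((1 - X ^ 2) * H * (2 * C (1/2:ℝ) + 1))) * C_half_two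
    · obtain ⟨G, H, hG, hH, hrep, hb1, hb2⟩ := hmain.2 ho
      set B1 : ℝ[X] := C (1/2:ℝ) * ((1 + X) ^ 2 * G + (1 - X) ^ 2 * H) with hB1
      have hB1psd : PsdR B1 := by
        intro x
        rw [hB1]
        simp only [eval_mul, eval_add, eval_pow, eval_sub, eval_C, eval_X, eval_one]
        have h1 : (0:ℝ) ≤ (1 + x) ^ 2 * G.eval x := mul_nonneg (sq_nonneg _) (hG x)
        have h2 : (0:ℝ) ≤ (1 - x) ^ 2 * H.eval x := mul_nonneg (sq_nonneg _) (hH x)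
        nlinarith
      obtain ⟨p, q, hpq⟩ := fejer B1.natDegree B1 le_rfl hB1psd
      have hWpsd : PsdR (C (2:ℝ) * (G + H)) := by
        intro x
        simp only [eval_mul, eval_add, eval_C]
        have := hG x; have := hH x
        nlinarith
      obtain ⟨p', q', hpq'⟩ := fejer _ _ le_rfl hWpsd
      refine ⟨p, q, p', q', ?_, ?_, ?_⟩
      · rw [← hpq, hB1]
        have h1 : (C (1/2:ℝ) * ((1 + X) ^ 2 * G + (1 - X) ^ 2 * H)).natDegree
            ≤ ((1 + X) ^ 2 * G + (1 - X) ^ 2 * H).natDegree := Stmt18Aux.natDegree_C_mul_le _ _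
        have h2 : ((1 + X) ^ 2 * G : ℝ[X]).natDegree ≤ 1 + d := by
          rw [show ((1 + X) ^ 2 * G : ℝ[X]) = (1 + X) * ((1 + X) * G) by ring]
          apply le_trans natDegree_mul_le
          rw [ndeg_1p]
          omega
        have h3 : ((1 - X) ^ 2 * H : ℝ[X]).natDegree ≤ 1 + d := by
          rw [show ((1 - X) ^ 2 * H : ℝ[X]) = (1 - X) * ((1 - X) * H) by ring]
          apply le_trans natDegree_mul_le
          rw [ndeg_1m]
          omega
        have h4 := natDegree_add_le ((1 + X) ^ 2 * G : ℝ[X]) ((1 - X) ^ 2 * H : ℝ[X])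
        omega
      · rw [← hpq']
        have h1 : (C (2:ℝ) * (G + H)).natDegree ≤ (G + H).natDegree :=
          Stmt18Aux.natDegree_C_mul_le _ _
        have h2 : G.natDegree ≤ d := deg_of_mul_le _ _ ndeg_1p_ne hb1
        have h3 : H.natDegree ≤ d := deg_of_mul_le _ _ ndeg_1m_ne hb2
        have h4 := natDegree_add_le G H
        omega
      · rw [← hpq, ← hpq', hB1, hc2, hrep]
        apply mul_left_cancel₀ (two_ne_zero : (2:ℝ[X]) ≠ 0)
        linear_combination (-2 * (G + H) * (1 - X ^ 2) * C (1/2:ℝ)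
          - (G + H) * (1 - X ^ 2) - ((1 + X) ^ 2 * G + (1 - X) ^ 2 * H)) * C_half_two
  · rintro ⟨p, q, p', q', _, _, hrep⟩
    intro x hx
    obtain ⟨hx1, hx2⟩ := hx
    rw [hrep]
    simp only [eval_add, eval_mul, eval_pow, eval_sub, eval_C, eval_X, eval_one]
    have h1 : (0:ℝ) ≤ 1 + x := by linarith
    have h2 : (0:ℝ) ≤ 1 - x := by linarith
    have h3 : (0:ℝ) ≤ (p'.eval x ^ 2 + q'.eval x ^ 2) * (1 / 2 * (1 + x) * (1 / 2 * (1 - x))) := by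
      apply mul_nonneg
      · nlinarith [sq_nonneg (p'.eval x), sq_nonneg (q'.eval x)]
      · nlinarith
    nlinarith [sq_nonneg (p.eval x), sq_nonneg (q.eval x)]
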